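/- arXiv:2106.15994 — 9 statements merged into one kernel-verified Lean document; each statement's English description precedes it below -/
import Mathlib

section
/- In the error-free n-person repeated public goods game, the threshold δ̄ = (c − b/n)/(b − b/n) satisfies 0 < δ̄ < 1, and for every continuation probability δ with δ̄ < δ < 1 the repeated-game payoff of an incumbent T_{n−1} player (who receives b − c per round forever) strictly exceeds that of a single defector mutant (who receives b(n−1)/n once and 0 thereafter): (b − c)/(1 − δ) > b(n − 1)/n. Hence the T_{n−1} strategy, which cooperates only if all n − 1 others cooperated in the previous round, is neutrally stable. -/
/-- In the error-free n-person repeated public goods game, the threshold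
`δ̄ = (c − b/n)/(b − b/n)` lies strictly between 0 and 1, and for every
continuation probability `δ` with `δ̄ < δ < 1`, the repeated-game payoff of an
incumbent `T_{n−1}` player strictly exceeds that of a single defector mutant:
`(b − c)/(1 − δ) > b(n − 1)/n`.  Hence `T_{n−1}` is neutrally stable. -/
theorem Tn1_neutrally_stable (n : ℕ) (hn : 2 ≤ n) (b c : ℝ)
    (hb0 : 0 < b / n) (hbc : b / n < c) (hcb : c < b) :
    (0 < (c - b / n) / (b - b / n) ∧ (c - b / n) / (b - b / n) < 1) ∧
    ∀ δ : ℝ, (c - b / n) / (b - b / n) < δ → δ < 1 →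
      (b - c) / (1 - δ) > b * ((n : ℝ) - 1) / n := by
  have hn0 : (n : ℝ) ≠ 0 := by positivity
  have hba : (0:ℝ) < b - b / n := by linarith
  refine ⟨⟨div_pos (by linarith) hba, (div_lt_one hba).2 (by linarith)⟩, ?_⟩
  intro δ hδ hδ1
  have h1 : c - b / n < δ * (b - b / n) := (div_lt_iff₀ hba).1 hδ
  have heq : b * ((n : ℝ) - 1) / n = b - b / n := by field_simp
  rw [gt_iff_lt, heq, lt_div_iff₀ (by linarith : (0:ℝ) < 1 - δ)]
  nlinarith
end

section
/- For every ε ∈ [0,1): F_D(ε) = b(n−1)(1−ε)/n, F_C(ε) = b(n−1)(1−ε)/n + (1−ε)(b/n − c), and consequently F_C(ε)/F_D(ε) = n(b−c)/((n−1)·b), a value independent of ε that lies strictly between 0 and 1. -/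
open Finset

/-- `ψ(j,q,ε) = (j choose q)·ε^q·(1−ε)^(j−q)`. -/
noncomputable def psi (j q : ℕ) (ε : ℝ) : ℝ :=
  (j.choose q : ℝ) * ε ^ q * (1 - ε) ^ (j - q)

/-- One-shot expected payoff of cooperation against `n−1` error-prone cooperators. -/
noncomputable def FC (n : ℕ) (b c ε : ℝ) : ℝ :=
  (1 - ε) * ∑ q ∈ range n, psi (n - 1) q ε * (b * ((n : ℝ) - q) / n - c) +
    ε * ∑ q ∈ range n, psi (n - 1) q ε * (b * ((n : ℝ) - 1 - q) / n)

/-- One-shot expected payoff of defection against `n−1` error-prone cooperators. -/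
noncomputable def FD (n : ℕ) (b ε : ℝ) : ℝ :=
  ∑ q ∈ range n, psi (n - 1) q ε * (b * ((n : ℝ) - 1 - q) / n)

lemma sum_psi (m : ℕ) (ε : ℝ) : ∑ q ∈ range (m + 1), psi m q ε = 1 := by
  have h : ∑ q ∈ range (m + 1), psi m q ε
      = ∑ q ∈ range (m + 1), ε ^ q * (1 - ε) ^ (m - q) * (m.choose q : ℝ) := by
    apply Finset.sum_congr rfl
    intro q hq
    unfold psi; ring
  rw [h, ← add_pow]
  norm_num

lemma sum_q_psi (m : ℕ) (ε : ℝ) :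
    ∑ q ∈ range (m + 1), (q : ℝ) * psi m q ε = m * ε := by
  cases m with
  | zero => simp [psi]
  | succ m =>
    rw [Finset.sum_range_succ']
    have key : ∀ q ∈ range (m + 1),
        ((q + 1 : ℕ) : ℝ) * psi (m + 1) (q + 1) ε = ((m : ℝ) + 1) * ε * psi m q ε := by
      intro q hq
      unfold psi
      have hc : ((m + 1).choose (q + 1) : ℝ) * ((q : ℝ) + 1) = ((m : ℝ) + 1) * (m.choose q : ℝ) := by
        have := Nat.add_one_mul_choose_eq m q
        have := congrArg (fun k : ℕ => (k : ℝ)) this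
        push_cast at this
        linarith
      have hsub : m + 1 - (q + 1) = m - q := Nat.succ_sub_succ m q
      rw [hsub]
      push_cast
      rw [pow_succ]
      linear_combination (ε ^ q * ε * (1 - ε) ^ (m - q)) * hc
    rw [Finset.sum_congr rfl key, ← Finset.mul_sum, sum_psi]
    push_cast
    ring

/-- For every `ε ∈ [0,1)`: `F_D(ε) = b(n−1)(1−ε)/n`,
`F_C(ε) = b(n−1)(1−ε)/n + (1−ε)(b/n − c)`, and consequently
`F_C(ε)/F_D(ε) = n(b−c)/((n−1)b)`, a value independent of `ε` that lies
strictly between 0 and 1. -/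
theorem FC_FD_closed_form (n : ℕ) (hn : 2 ≤ n) (b c : ℝ)
    (hb0 : 0 < b / n) (hbc : b / n < c) (hcb : c < b) :
    (∀ ε : ℝ, 0 ≤ ε → ε < 1 →
      FD n b ε = b * ((n : ℝ) - 1) * (1 - ε) / n ∧
      FC n b c ε = b * ((n : ℝ) - 1) * (1 - ε) / n + (1 - ε) * (b / n - c) ∧
      FC n b c ε / FD n b ε = n * (b - c) / (((n : ℝ) - 1) * b)) ∧
    0 < n * (b - c) / (((n : ℝ) - 1) * b) ∧
    n * (b - c) / (((n : ℝ) - 1) * b) < 1 := by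
  obtain ⟨m, rfl⟩ : ∃ m, n = m + 1 := ⟨n - 1, (Nat.succ_pred_eq_of_pos (by omega)).symm⟩
  have hm : 1 ≤ m := by omega
  have hmR : (1 : ℝ) ≤ (m : ℝ) := by exact_mod_cast hm
  have hnR : ((m : ℝ) + 1) ≠ 0 := by positivity
  have hb : 0 < b := by
    have : (0 : ℝ) < ((m : ℝ) + 1) := by positivity
    have := (div_pos_iff.mp (by push_cast at hb0 ⊢; exact hb0)).resolve_right (by
      rintro ⟨_, h⟩; linarith)
    exact this.1
  have hbnc : b < ((m : ℝ) + 1) * c := by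
    have h := hbc
    push_cast at h
    rw [div_lt_iff₀ (by positivity)] at h
    linarith
  constructor
  · intro ε hε0 hε1
    have hFD : FD (m + 1) b ε = b * (((m : ℝ) + 1) - 1) * (1 - ε) / ((m : ℝ) + 1) := by
      unfold FD
      have h1 : ∀ q ∈ range (m + 1),
          psi (m + 1 - 1) q ε * (b * (((m + 1 : ℕ) : ℝ) - 1 - q) / ((m + 1 : ℕ) : ℝ))
          = b / ((m : ℝ) + 1) * ((m : ℝ) * psi m q ε - (q : ℝ) * psi m q ε) := by
        intro q hq
        simp only [Nat.add_sub_cancel]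
        push_cast
        ring
      rw [Finset.sum_congr rfl h1, ← Finset.mul_sum, Finset.sum_sub_distrib,
        ← Finset.mul_sum, sum_psi, sum_q_psi]
      push_cast
      field_simp
      ring
    have hA : ∑ q ∈ range (m + 1),
        psi (m + 1 - 1) q ε * (b * (((m + 1 : ℕ) : ℝ) - q) / ((m + 1 : ℕ) : ℝ) - c)
        = b * (((m : ℝ) + 1) - (m : ℝ) * ε) / ((m : ℝ) + 1) - c := by
      have h2 : ∀ q ∈ range (m + 1),
          psi (m + 1 - 1) q ε * (b * (((m + 1 : ℕ) : ℝ) - q) / ((m + 1 : ℕ) : ℝ) - c)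
          = b / ((m : ℝ) + 1) * (((m : ℝ) + 1) * psi m q ε - (q : ℝ) * psi m q ε)
            - c * psi m q ε := by
        intro q hq
        simp only [Nat.add_sub_cancel]
        push_cast
        ring
      rw [Finset.sum_congr rfl h2, Finset.sum_sub_distrib, ← Finset.mul_sum,
        Finset.sum_sub_distrib, ← Finset.mul_sum, ← Finset.mul_sum, sum_psi, sum_q_psi]
      field_simp
    have hFC : FC (m + 1) b c ε
        = b * (((m : ℝ) + 1) - 1) * (1 - ε) / ((m : ℝ) + 1) + (1 - ε) * (b / ((m : ℝ) + 1) - c) := by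
      have : FC (m + 1) b c ε = (1 - ε) * (∑ q ∈ range (m + 1),
          psi (m + 1 - 1) q ε * (b * (((m + 1 : ℕ) : ℝ) - q) / ((m + 1 : ℕ) : ℝ) - c))
          + ε * FD (m + 1) b ε := rfl
      rw [this, hA, hFD]
      field_simp
      ring
    refine ⟨by push_cast; exact hFD, by push_cast; exact hFC, ?_⟩
    push_cast
    rw [hFD, hFC]
    have h1ε : (0 : ℝ) < 1 - ε := by linarith
    have hm0 : (0 : ℝ) < (m : ℝ) := by linarith
    rw [div_eq_div_iff (ne_of_gt (div_pos (by nlinarith [mul_pos (mul_pos hb hm0) h1ε]) (by positivity))) (ne_of_gt (by nlinarith))]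
    field_simp
    ring
  have hm0 : (0 : ℝ) < (m : ℝ) := by linarith
  constructor
  · push_cast
    apply div_pos (by nlinarith) (by nlinarith)
  · push_cast
    rw [div_lt_one (by nlinarith)]
    nlinarith
end

section
/- For every k ∈ {1,…,n−2}, ε ∈ (0,1) and δ ∈ (0,1): V_k(ε,δ) − W_n(ε,δ) = [F_D(ε)/(1 − δ·Σ_{q=0}^{n−k−2} ψ(n−1,q,ε) − δ(1−ε)·ψ(n−1,n−k−1,ε))] · [Δ(ε;k,δ) − (1 − F_C(ε)/F_D(ε))]. In particular, since the first bracketed factor is strictly positive, V_k(ε,δ) − W_n(ε,δ) has the same sign as Δ(ε;k,δ) − (1 − F_C(ε)/F_D(ε)). -/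
open Finset

/-- Repeated-game payoff of the incumbent `T_k` strategy in a `T_k` population. -/
noncomputable def Vk (n k : ℕ) (b c ε δ : ℝ) : ℝ :=
  FC n b c ε /
    (1 - δ * ∑ q ∈ range (n - k - 1), psi (n - 1) q ε -
      δ * (1 - ε) * psi (n - 1) (n - k - 1) ε)

/-- Repeated-game payoff of a single defector (`T_n`) mutant in a `T_k` population. -/
noncomputable def Wn (n k : ℕ) (b ε δ : ℝ) : ℝ :=
  FD n b ε / (1 - δ * ∑ q ∈ range (n - k - 1), psi (n - 1) q ε)

/-- The continuation factor `Δ(ε;k,δ)`. -/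
noncomputable def Delta (n k : ℕ) (ε δ : ℝ) : ℝ :=
  δ * (1 - ε) * psi (n - 1) (n - k - 1) ε /
    (1 - δ * ∑ q ∈ range (n - k - 1), psi (n - 1) q ε)

lemma psi_nonneg (j q : ℕ) (ε : ℝ) (h0 : 0 ≤ ε) (h1 : ε ≤ 1) : 0 ≤ psi j q ε := by
  unfold psi
  have : (0:ℝ) ≤ 1 - ε := by linarith
  positivity

lemma psi_sum_one (n : ℕ) (hn : 1 ≤ n) (ε : ℝ) :
    ∑ q ∈ range n, psi (n - 1) q ε = 1 := by
  have h : n = (n - 1) + 1 := by omega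
  rw [h]
  have hsum := add_pow ε (1 - ε) (n - 1)
  simp only [add_sub_cancel, one_pow] at hsum
  unfold psi
  simp only [Nat.add_sub_cancel]
  conv_rhs => rw [hsum]
  apply Finset.sum_congr rfl
  intro q _
  ring

/-- For every `k ∈ {1,…,n−2}`, `ε ∈ (0,1)` and `δ ∈ (0,1)`:
`V_k − W_n = [F_D/(1 − δΣ − δ(1−ε)ψ)]·[Δ − (1 − F_C/F_D)]`,
and the first bracketed factor is strictly positive, so `V_k − W_n` has the
same sign as `Δ(ε;k,δ) − (1 − F_C(ε)/F_D(ε))`. -/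
theorem Vk_sub_Wn_factorization (n : ℕ) (hn : 3 ≤ n) (b c : ℝ)
    (hb0 : 0 < b / n) (hbc : b / n < c) (hcb : c < b)
    (k : ℕ) (hk1 : 1 ≤ k) (hk2 : k ≤ n - 2)
    (ε : ℝ) (hε0 : 0 < ε) (hε1 : ε < 1)
    (δ : ℝ) (hδ0 : 0 < δ) (hδ1 : δ < 1) :
    Vk n k b c ε δ - Wn n k b ε δ =
      (FD n b ε /
        (1 - δ * ∑ q ∈ range (n - k - 1), psi (n - 1) q ε -
          δ * (1 - ε) * psi (n - 1) (n - k - 1) ε)) *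
      (Delta n k ε δ - (1 - FC n b c ε / FD n b ε)) ∧
    0 < FD n b ε /
        (1 - δ * ∑ q ∈ range (n - k - 1), psi (n - 1) q ε -
          δ * (1 - ε) * psi (n - 1) (n - k - 1) ε) := by
  have hε0' : (0:ℝ) ≤ ε := le_of_lt hε0
  have hε1' : ε ≤ 1 := le_of_lt hε1
  have hnR : (0:ℝ) < n := by positivity
  have hb : 0 < b := by
    have := mul_pos hb0 hnR
    rwa [div_mul_cancel₀ b (ne_of_gt hnR)] at this
  -- FD > 0
  have hFD : 0 < FD n b ε := by
    unfold FD
    apply Finset.sum_pos'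
    · intro q hq
      rw [Finset.mem_range] at hq
      have hq' : (q:ℝ) ≤ (n:ℝ) - 1 := by
        have : (q:ℝ) + 1 ≤ (n:ℝ) := by exact_mod_cast hq
        linarith
      have h1 : 0 ≤ psi (n-1) q ε := psi_nonneg _ _ _ hε0' hε1'
      have h2 : 0 ≤ b * ((n:ℝ) - 1 - q) / n := by
        apply div_nonneg _ (le_of_lt hnR)
        apply mul_nonneg (le_of_lt hb)
        linarith
      exact mul_nonneg h1 h2
    · refine ⟨0, Finset.mem_range.mpr (by omega), ?_⟩
      have h1 : 0 < psi (n-1) 0 ε := by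
        unfold psi
        simp only [Nat.choose_zero_right, Nat.cast_one, pow_zero, Nat.sub_zero]
        have : (0:ℝ) < 1 - ε := by linarith
        positivity
      have h2 : 0 < b * ((n:ℝ) - 1 - (0:ℕ)) / n := by
        have h3 : (3:ℝ) ≤ (n:ℝ) := by exact_mod_cast hn
        push_cast
        apply div_pos _ hnR
        apply mul_pos hb
        linarith
      exact mul_pos h1 h2
  set S := ∑ q ∈ range (n - k - 1), psi (n - 1) q ε with hS
  set P := psi (n - 1) (n - k - 1) ε with hP
  have hS0 : 0 ≤ S := Finset.sum_nonneg fun q _ => psi_nonneg _ _ _ hε0' hε1'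
  have hP0 : 0 ≤ P := psi_nonneg _ _ _ hε0' hε1'
  -- S + P ≤ 1
  have hSP : S + P ≤ 1 := by
    have hsucc : n - k = (n - k - 1) + 1 := by omega
    have h1 : S + P = ∑ q ∈ range (n - k), psi (n - 1) q ε := by
      rw [hsucc, Finset.sum_range_succ]
    have h2 : ∑ q ∈ range (n - k), psi (n - 1) q ε ≤ ∑ q ∈ range n, psi (n - 1) q ε := by
      apply Finset.sum_le_sum_of_subset_of_nonneg
      · exact Finset.range_subset_range.mpr (by omega)
      · intro q _ _; exact psi_nonneg _ _ _ hε0' hε1'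
    rw [h1]
    calc ∑ q ∈ range (n - k), psi (n - 1) q ε ≤ ∑ q ∈ range n, psi (n - 1) q ε := h2
      _ = 1 := psi_sum_one n (by omega) ε
  have hX : 0 ≤ S + (1 - ε) * P := by nlinarith
  have hX1 : S + (1 - ε) * P ≤ 1 := by nlinarith
  have hB : 0 < 1 - δ * S - δ * (1 - ε) * P := by nlinarith
  have hA : 0 < 1 - δ * S := by nlinarith
  constructor
  · unfold Vk Wn Delta
    rw [← hS, ← hP]
    field_simp
    ring
  · exact div_pos hFD hB
end

section
/- For every k ∈ {1,…,n−1}, the function ε ↦ Δ₁(ε;k) is strictly decreasing on (0,1); equivalently, Δ₁(ε;k) = (1−ε)·C(n−1,n−k−1)/Σ_{q=0}^{k} C(n−1,n−k−1+q)·(ε/(1−ε))^q for ε ∈ (0,1), and this expression is strictly decreasing in ε. -/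
open Finset

/-- The `δ → 1` limit of the continuation factor:
`Δ₁(ε;k) = (1−ε)·ψ(n−1,n−k−1,ε)/Σ_{q=n−k−1}^{n−1} ψ(n−1,q,ε)`. -/
noncomputable def Delta1 (n k : ℕ) (ε : ℝ) : ℝ :=
  (1 - ε) * psi (n - 1) (n - k - 1) ε /
    ∑ q ∈ Icc (n - k - 1) (n - 1), psi (n - 1) q ε

lemma S_pos (m k : ℕ) (hk : k ≤ m) (ε : ℝ) (hε : ε ∈ Set.Ioo (0:ℝ) 1) :
    0 < ∑ q ∈ range (k + 1), (m.choose (m - k + q) : ℝ) * (ε / (1 - ε)) ^ q := by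
  obtain ⟨h0, h1⟩ := hε
  have hr : 0 < ε / (1 - ε) := div_pos h0 (by linarith)
  apply Finset.sum_pos'
  · intro i _
    positivity
  · refine ⟨0, Finset.mem_range.mpr (by omega), ?_⟩
    have : 0 < m.choose (m - k + 0) := Nat.choose_pos (by omega)
    have := (Nat.cast_pos (α := ℝ)).mpr this
    simpa using by positivity

lemma den_eq (m k : ℕ) (hk : k ≤ m) (ε : ℝ) (hε : ε ∈ Set.Ioo (0:ℝ) 1) :
    ∑ q ∈ Icc (m - k) m, psi m q ε =
      ε ^ (m - k) * (1 - ε) ^ k *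
        ∑ q ∈ range (k + 1), (m.choose (m - k + q) : ℝ) * (ε / (1 - ε)) ^ q := by
  obtain ⟨h0, h1⟩ := hε
  have h1' : (0:ℝ) < 1 - ε := by linarith
  rw [← Finset.Ico_add_one_right_eq_Icc, Finset.sum_Ico_eq_sum_range, Finset.mul_sum]
  have hcard : m + 1 - (m - k) = k + 1 := by omega
  rw [hcard]
  refine Finset.sum_congr rfl ?_
  intro j hj
  have hjk : j ≤ k := by simpa [Nat.lt_succ_iff] using Finset.mem_range.mp hj
  unfold psi
  have h1 : m - (m - k + j) = k - j := by omega
  rw [h1, div_pow, pow_add]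
  rw [show (1 - ε) ^ (k - j) = (1 - ε) ^ k / (1 - ε) ^ j from
    (pow_sub₀ _ (ne_of_gt h1') hjk)]
  field_simp

lemma g_anti (m k : ℕ) (hk : k ≤ m) :
    StrictAntiOn
      (fun ε : ℝ => (1 - ε) * (m.choose (m - k) : ℝ) /
        ∑ q ∈ range (k + 1), (m.choose (m - k + q) : ℝ) * (ε / (1 - ε)) ^ q)
      (Set.Ioo 0 1) := by
  intro a ha b hb hab
  obtain ⟨ha0, ha1⟩ := ha
  obtain ⟨hb0, hb1⟩ := hb
  have hA : (0:ℝ) < (m.choose (m - k) : ℝ) :=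
    Nat.cast_pos.mpr (Nat.choose_pos (by omega))
  have hra' : (0:ℝ) < 1 - a := by linarith
  have hra : 0 ≤ a / (1 - a) := by positivity
  have hrb : (0:ℝ) < 1 - b := by linarith
  have hr : a / (1 - a) ≤ b / (1 - b) := by
    rw [div_le_div_iff₀ (by linarith) hrb]; nlinarith
  have hSa : 0 < ∑ q ∈ range (k + 1), (m.choose (m - k + q) : ℝ) * (a / (1 - a)) ^ q := by
    apply Finset.sum_pos'
    · intro i _; positivity
    · refine ⟨0, Finset.mem_range.mpr (by omega), ?_⟩
      simpa using hA
  have hS : (∑ q ∈ range (k + 1), (m.choose (m - k + q) : ℝ) * (a / (1 - a)) ^ q)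
      ≤ ∑ q ∈ range (k + 1), (m.choose (m - k + q) : ℝ) * (b / (1 - b)) ^ q := by
    gcongr with i hi
  have hN : (1 - b) * (m.choose (m - k) : ℝ) < (1 - a) * (m.choose (m - k) : ℝ) := by
    nlinarith
  have hNa : 0 ≤ (1 - a) * (m.choose (m - k) : ℝ) := by positivity
  exact div_lt_div₀ hN hS hNa hSa

lemma Delta1_eq (n : ℕ) (hn : 2 ≤ n) (k : ℕ) (hk1 : 1 ≤ k) (hk2 : k ≤ n - 1)
    (ε : ℝ) (hε : ε ∈ Set.Ioo (0:ℝ) 1) :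
    Delta1 n k ε =
      (1 - ε) * ((n - 1).choose (n - k - 1) : ℝ) /
        ∑ q ∈ range (k + 1),
          ((n - 1).choose (n - k - 1 + q) : ℝ) * (ε / (1 - ε)) ^ q := by
  obtain ⟨h0, h1⟩ := hε
  have h1' : (0:ℝ) < 1 - ε := by linarith
  have hsub : n - k - 1 = n - 1 - k := by omega
  unfold Delta1
  simp only [hsub]
  rw [den_eq (n - 1) k hk2 ε ⟨h0, h1⟩]
  have hpsi : psi (n - 1) (n - 1 - k) ε =
      ((n - 1).choose (n - 1 - k) : ℝ) * ε ^ (n - 1 - k) * (1 - ε) ^ k := by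
    unfold psi
    rw [show n - 1 - (n - 1 - k) = k by omega]
  rw [hpsi]
  have hS := S_pos (n - 1) k hk2 ε ⟨h0, h1⟩
  rw [div_eq_div_iff (by positivity) (ne_of_gt hS)]
  ring

/-- For every `k ∈ {1,…,n−1}`, `Δ₁(·;k)` is strictly decreasing on `(0,1)`;
equivalently, on `(0,1)` it equals
`(1−ε)·C(n−1,n−k−1)/Σ_{q=0}^{k} C(n−1,n−k−1+q)·(ε/(1−ε))^q`,
an expression strictly decreasing in `ε`. -/
theorem Delta1_strictAntiOn (n : ℕ) (hn : 2 ≤ n)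
    (k : ℕ) (hk1 : 1 ≤ k) (hk2 : k ≤ n - 1) :
    StrictAntiOn (fun ε => Delta1 n k ε) (Set.Ioo 0 1) ∧
    (∀ ε : ℝ, ε ∈ Set.Ioo (0 : ℝ) 1 →
      Delta1 n k ε =
        (1 - ε) * ((n - 1).choose (n - k - 1) : ℝ) /
          ∑ q ∈ range (k + 1),
            ((n - 1).choose (n - k - 1 + q) : ℝ) * (ε / (1 - ε)) ^ q) ∧
    StrictAntiOn
      (fun ε : ℝ =>
        (1 - ε) * ((n - 1).choose (n - k - 1) : ℝ) /
          ∑ q ∈ range (k + 1),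
            ((n - 1).choose (n - k - 1 + q) : ℝ) * (ε / (1 - ε)) ^ q)
      (Set.Ioo 0 1) := by
  have hsub : n - k - 1 = n - 1 - k := by omega
  have hg : StrictAntiOn
      (fun ε : ℝ =>
        (1 - ε) * ((n - 1).choose (n - k - 1) : ℝ) /
          ∑ q ∈ range (k + 1),
            ((n - 1).choose (n - k - 1 + q) : ℝ) * (ε / (1 - ε)) ^ q)
      (Set.Ioo 0 1) := by
    have := g_anti (n - 1) k hk2
    simpa only [← hsub] using this
  refine ⟨?_, fun ε hε => Delta1_eq n hn k hk1 hk2 ε hε, hg⟩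
  intro a ha b hb hab
  simp only [Delta1_eq n hn k hk1 hk2 a ha, Delta1_eq n hn k hk1 hk2 b hb]
  exact hg ha hb hab
end

section
/- For every k ∈ {1,…,n−1}: Δ₁(ε;k) → 1 as ε → 0⁺ and Δ₁(ε;k) → 0 as ε → 1⁻. Consequently, for every threshold t ∈ (0,1) there exists a unique ε_k ∈ (0,1) with Δ₁(ε_k;k) = t, and Δ₁(ε;k) > t holds if and only if 0 < ε < ε_k. -/
open Finset Filter Topology

/-! Write `m = n - 1` and `r = n - k - 1`. Dividing `Σ_{q ≥ r} ψ(m,q,ε)` by `ε^r (1-ε)^(m-r)`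
leaves the polynomial `binomTail m r (ε/(1-ε))`, whose coefficients are nonnegative and whose
constant term is `C(m,r)`. Hence `Δ₁(ε) = (1-ε) · C(m,r) / binomTail m r (ε/(1-ε))` is the product of the
strictly decreasing factor `1 - ε` and a factor that decreases from `1` at `ε = 0`; this gives
both limits and strict monotonicity, and the threshold follows from the intermediate value
theorem. -/

noncomputable def binomTail (m r : ℕ) (x : ℝ) : ℝ :=
  ∑ q ∈ Icc r m, (m.choose q : ℝ) * x ^ (q - r)

section binomTail

variable {m r : ℕ}

theorem continuous_binomTail : Continuous (binomTail m r) := by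
  unfold binomTail; fun_prop

theorem binomTail_zero (hr : r ≤ m) : binomTail m r 0 = m.choose r := by
  rw [binomTail, sum_eq_single_of_mem r (mem_Icc.2 ⟨le_rfl, hr⟩)]
  · simp
  · intro q hq hqr
    rw [zero_pow (by have := (mem_Icc.1 hq).1; omega), mul_zero]

theorem binomTail_monotoneOn : MonotoneOn (binomTail m r) (Set.Ici 0) := fun _ hx _ _ hxy =>
  sum_le_sum fun _ _ => by gcongr

theorem choose_le_binomTail (hr : r ≤ m) {x : ℝ} (hx : 0 ≤ x) :
    (m.choose r : ℝ) ≤ binomTail m r x :=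
  binomTail_zero hr ▸ binomTail_monotoneOn Set.self_mem_Ici hx hx

theorem binomTail_pos (hr : r ≤ m) {x : ℝ} (hx : 0 ≤ x) : 0 < binomTail m r x :=
  (Nat.cast_pos.2 (Nat.choose_pos hr)).trans_le (choose_le_binomTail hr hx)

theorem sum_psi_eq_binomTail (hr : r ≤ m) {ε : ℝ} (hε : ε < 1) :
    ∑ q ∈ Icc r m, psi m q ε = ε ^ r * (1 - ε) ^ (m - r) * binomTail m r (ε / (1 - ε)) := by
  have h1ε : 1 - ε ≠ 0 := by linarith
  rw [binomTail, mul_sum]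
  refine sum_congr rfl fun q hq => ?_
  obtain ⟨hrq, hqm⟩ := mem_Icc.1 hq
  have hε_pow : ε ^ q = ε ^ r * ε ^ (q - r) := by rw [← pow_add]; congr 1; omega
  have h1ε_pow : (1 - ε) ^ (m - r) = (1 - ε) ^ (m - q) * (1 - ε) ^ (q - r) := by
    rw [← pow_add]; congr 1; omega
  rw [psi, div_pow, hε_pow, h1ε_pow]
  field_simp

end binomTail

/-- Equal to `Delta1` on `(0, 1)` but, unlike `Delta1` (which is `0 / 0` at `ε = 0` once `r > 0`),
continuous on `[0, 1)`. -/
noncomputable def delta1Closed (m r : ℕ) (ε : ℝ) : ℝ :=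
  (1 - ε) * m.choose r / binomTail m r (ε / (1 - ε))

section delta1Closed

variable {m r : ℕ}

theorem eqOn_Delta1_delta1Closed (n k : ℕ) :
    Set.EqOn (Delta1 n k) (delta1Closed (n - 1) (n - k - 1)) (Set.Ioo 0 1) := by
  rintro ε ⟨hε0, hε1⟩
  have hr : n - k - 1 ≤ n - 1 := by omega
  have hpow : ε ^ (n - k - 1) * (1 - ε) ^ (n - 1 - (n - k - 1)) ≠ 0 := by
    have : 0 < 1 - ε := by linarith
    positivity
  rw [Delta1, sum_psi_eq_binomTail hr hε1, psi, delta1Closed]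
  field_simp

theorem continuousAt_delta1Closed (hr : r ≤ m) {ε : ℝ} (hε : ε ∈ Set.Ico 0 1) :
    ContinuousAt (delta1Closed m r) ε := by
  have h1ε : 1 - ε ≠ 0 := by linarith [hε.2]
  have hx : 0 ≤ ε / (1 - ε) := div_nonneg hε.1 (by linarith [hε.2])
  exact (by fun_prop : ContinuousAt (fun ε : ℝ => (1 - ε) * m.choose r) ε).div
    (continuous_binomTail.continuousAt.comp (continuousAt_id.div (by fun_prop) h1ε))
    (binomTail_pos hr hx).ne'

theorem continuousOn_delta1Closed (hr : r ≤ m) : ContinuousOn (delta1Closed m r) (Set.Ico 0 1) :=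
  fun _ hε => (continuousAt_delta1Closed hr hε).continuousWithinAt

theorem delta1Closed_zero (hr : r ≤ m) : delta1Closed m r 0 = 1 := by
  have hC : (m.choose r : ℝ) ≠ 0 := Nat.cast_ne_zero.2 (Nat.choose_pos hr).ne'
  simp [delta1Closed, binomTail_zero hr, hC]

theorem delta1Closed_pos (hr : r ≤ m) {ε : ℝ} (hε : ε ∈ Set.Ico 0 1) :
    0 < delta1Closed m r ε := by
  have h1ε : 0 < 1 - ε := by linarith [hε.2]
  have := binomTail_pos hr (div_nonneg hε.1 h1ε.le)
  have : 0 < (m.choose r : ℝ) := Nat.cast_pos.2 (Nat.choose_pos hr)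
  unfold delta1Closed
  positivity

theorem delta1Closed_le_one_sub (hr : r ≤ m) {ε : ℝ} (hε : ε ∈ Set.Ico 0 1) :
    delta1Closed m r ε ≤ 1 - ε := by
  have h1ε : 0 < 1 - ε := by linarith [hε.2]
  have hx : 0 ≤ ε / (1 - ε) := div_nonneg hε.1 h1ε.le
  rw [delta1Closed, mul_div_assoc]
  refine mul_le_of_le_one_right h1ε.le ?_
  exact div_le_one_of_le₀ (choose_le_binomTail hr hx) (binomTail_pos hr hx).le

theorem delta1Closed_strictAntiOn (hr : r ≤ m) :
    StrictAntiOn (delta1Closed m r) (Set.Ico 0 1) := by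
  intro a ha b hb hab
  have h1a : 0 < 1 - a := by linarith [ha.2]
  have h1b : 0 < 1 - b := by linarith [hb.2]
  have hxa : 0 ≤ a / (1 - a) := div_nonneg ha.1 h1a.le
  have hxb : 0 ≤ b / (1 - b) := div_nonneg hb.1 h1b.le
  have hx : a / (1 - a) ≤ b / (1 - b) := by
    rw [div_le_div_iff₀ h1a h1b]; nlinarith
  have hC : 0 < (m.choose r : ℝ) := Nat.cast_pos.2 (Nat.choose_pos hr)
  have hPa := binomTail_pos hr hxa
  simp only [delta1Closed, mul_div_assoc]
  exact mul_lt_mul (by linarith) (div_le_div_of_nonneg_left hC.le hPa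
    (binomTail_monotoneOn hxa hxb hx)) (div_pos hC (binomTail_pos hr hxb)) h1a.le

theorem tendsto_delta1Closed_nhdsGT_zero (hr : r ≤ m) :
    Tendsto (delta1Closed m r) (𝓝[>] 0) (𝓝 1) := by
  rw [← delta1Closed_zero hr]
  exact (continuousAt_delta1Closed hr ⟨le_rfl, one_pos⟩).tendsto.mono_left nhdsWithin_le_nhds

theorem tendsto_delta1Closed_nhdsLT_one (hr : r ≤ m) :
    Tendsto (delta1Closed m r) (𝓝[<] 1) (𝓝 0) := by
  have h1ε : Tendsto (fun ε : ℝ => 1 - ε) (𝓝[<] 1) (𝓝 0) :=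
    ((continuous_sub_left 1).tendsto' 1 0 (sub_self 1)).mono_left nhdsWithin_le_nhds
  refine tendsto_of_tendsto_of_tendsto_of_le_of_le' tendsto_const_nhds h1ε ?_ ?_ <;>
    filter_upwards [Ioo_mem_nhdsLT one_pos] with ε hε
  exacts [(delta1Closed_pos hr (Set.Ioo_subset_Ico_self hε)).le,
    delta1Closed_le_one_sub hr (Set.Ioo_subset_Ico_self hε)]

end delta1Closed

theorem StrictAntiOn.exists_unique_eq_of_tendsto {α β : Type*} [ConditionallyCompleteLinearOrder α]
    [TopologicalSpace α] [OrderTopology α] [DenselyOrdered α] [LinearOrder β] [TopologicalSpace β]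
    [OrderClosedTopology β] {f : α → β} {a b : α} {l L t : β} (hab : a < b)
    (hf : ContinuousOn f (Set.Ioo a b)) (hanti : StrictAntiOn f (Set.Ioo a b))
    (ha : Tendsto f (𝓝[>] a) (𝓝 L)) (hb : Tendsto f (𝓝[<] b) (𝓝 l)) (ht : t ∈ Set.Ioo l L) :
    ∃ c ∈ Set.Ioo a b, f c = t ∧ (∀ x ∈ Set.Ioo a b, f x = t → x = c) ∧
      ∀ x ∈ Set.Ioo a b, (t < f x ↔ x < c) := by
  have := nhdsLT_neBot_of_exists_lt ⟨a, hab⟩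
  have := nhdsGT_neBot_of_exists_gt ⟨b, hab⟩
  obtain ⟨c, hc, hfc⟩ := isPreconnected_Ioo.intermediate_value_Ioo
    (le_principal_iff.2 (Ioo_mem_nhdsLT hab)) (le_principal_iff.2 (Ioo_mem_nhdsGT hab))
    hf hb ha ht
  refine ⟨c, hc, hfc, fun x hx hfx => hanti.injOn hx hc (hfx.trans hfc.symm), ?_⟩
  intro x hx
  rw [← hfc]
  exact hanti.lt_iff_gt hc hx

theorem Delta1_limits_and_threshold_general (n : ℕ)
    (k : ℕ) :
    Tendsto (fun ε => Delta1 n k ε) (nhdsWithin 0 (Set.Ioi 0)) (nhds 1) ∧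
    Tendsto (fun ε => Delta1 n k ε) (nhdsWithin 1 (Set.Iio 1)) (nhds 0) ∧
    ∀ t : ℝ, 0 < t → t < 1 →
      ∃ εk : ℝ, εk ∈ Set.Ioo (0 : ℝ) 1 ∧ Delta1 n k εk = t ∧
        (∀ ε' ∈ Set.Ioo (0 : ℝ) 1, Delta1 n k ε' = t → ε' = εk) ∧
        ∀ ε ∈ Set.Ioo (0 : ℝ) 1, (Delta1 n k ε > t ↔ ε < εk) := by
  have hr : n - k - 1 ≤ n - 1 := by omega
  have hEq := eqOn_Delta1_delta1Closed n k
  have hlim0 := (tendsto_delta1Closed_nhdsGT_zero hr).congr'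
    (eventuallyEq_of_mem (Ioo_mem_nhdsGT one_pos) hEq.symm)
  have hlim1 := (tendsto_delta1Closed_nhdsLT_one hr).congr'
    (eventuallyEq_of_mem (Ioo_mem_nhdsLT one_pos) hEq.symm)
  refine ⟨hlim0, hlim1, fun t ht0 ht1 => ?_⟩
  exact StrictAntiOn.exists_unique_eq_of_tendsto one_pos
    ((continuousOn_delta1Closed hr).mono Set.Ioo_subset_Ico_self |>.congr hEq)
    ((delta1Closed_strictAntiOn hr).mono Set.Ioo_subset_Ico_self |>.congr hEq.symm)
    hlim0 hlim1 ⟨ht0, ht1⟩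

/-- For every `k ∈ {1,…,n−1}`: `Δ₁(ε;k) → 1` as `ε → 0⁺` and `Δ₁(ε;k) → 0` as
`ε → 1⁻`.  Consequently, for every threshold `t ∈ (0,1)` there is a unique
`ε_k ∈ (0,1)` with `Δ₁(ε_k;k) = t`, and `Δ₁(ε;k) > t` iff `0 < ε < ε_k`. -/
theorem Delta1_limits_and_threshold (n : ℕ) (hn : 2 ≤ n)
    (k : ℕ) (hk1 : 1 ≤ k) (hk2 : k ≤ n - 1) :
    Tendsto (fun ε => Delta1 n k ε) (nhdsWithin 0 (Set.Ioi 0)) (nhds 1) ∧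
    Tendsto (fun ε => Delta1 n k ε) (nhdsWithin 1 (Set.Iio 1)) (nhds 0) ∧
    ∀ t : ℝ, 0 < t → t < 1 →
      ∃ εk : ℝ, εk ∈ Set.Ioo (0 : ℝ) 1 ∧ Delta1 n k εk = t ∧
        (∀ ε' ∈ Set.Ioo (0 : ℝ) 1, Delta1 n k ε' = t → ε' = εk) ∧
        ∀ ε ∈ Set.Ioo (0 : ℝ) 1, (Delta1 n k ε > t ↔ ε < εk) :=
  Delta1_limits_and_threshold_general n k
end

section
/- Let t = 1 − n(b−c)/((n−1)·b), which lies in (0,1), and for each k ∈ {1,…,n−1} let ε_k be the unique solution in (0,1) of Δ₁(ε_k;k) = t (it exists and is unique because Δ₁(·;k) is continuous and strictly decreasing on (0,1) with limits 1 at 0⁺ and 0 at 1⁻). Then ε_{k+1} < ε_k for every k ∈ {1,…,n−2}; that is, 0 < ε_{n−1} < ε_{n−2} < ⋯ < ε_1 < 1: the supremum of mistake rates supporting the evolutionary stability of the conditional cooperative strategy T_k strictly increases as its tolerance increases (as k decreases). -/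
open Finset

/-!
Dividing numerator and denominator by `(1 - ε) ψ(m, j, ε)` (with `m = n - 1`, `j = n - k - 1`)
gives `1 / Δ₁(ε; k) = Σ_{i=0}^{m-j} (C(m, j+i) / C(m, j)) εⁱ / (1-ε)^{i+1}`. Every term
increases with `ε`, so `Δ₁(·; k)` is antitone. Passing from `k` to `k + 1` lowers `j` by one,
which adds a positive term to the sum and, by log-concavity of `q ↦ C(m, q)`, does not decrease
the ratios `C(m, j+i) / C(m, j)`; hence `Δ₁(ε; k+1) < Δ₁(ε; k)`. Both facts together force
`ε_{k+1} < ε_k` from `Δ₁(ε_k; k) = Δ₁(ε_{k+1}; k+1)`.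
-/

theorem Nat.choose_mul_choose_succ_le {m p r : ℕ} (hpr : p ≤ r) :
    m.choose p * m.choose (r + 1) ≤ m.choose (p + 1) * m.choose r := by
  have h := Nat.choose_succ_right_eq m
  apply Nat.le_of_mul_le_mul_right _ (by positivity : 0 < (p + 1) * (r + 1))
  calc m.choose p * m.choose (r + 1) * ((p + 1) * (r + 1))
      = m.choose (r + 1) * (r + 1) * m.choose p * (p + 1) := by ring
    _ = m.choose r * (m - r) * m.choose p * (p + 1) := by rw [h]
    _ ≤ m.choose r * (m - p) * m.choose p * (r + 1) := by gcongr
    _ = m.choose p * (m - p) * m.choose r * (r + 1) := by ring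
    _ = m.choose (p + 1) * (p + 1) * m.choose r * (r + 1) := by rw [h]
    _ = m.choose (p + 1) * m.choose r * ((p + 1) * (r + 1)) := by ring

noncomputable def tailRatioSum (m j : ℕ) (ε : ℝ) : ℝ :=
  ∑ i ∈ range (m - j + 1), (m.choose (j + i) / m.choose j : ℝ) * (ε ^ i / (1 - ε) ^ (i + 1))

theorem sum_psi_Icc_eq_mul_tailRatioSum {m j : ℕ} (hj : j ≤ m) {ε : ℝ} (hε : ε ≠ 1) :
    ∑ q ∈ Icc j m, psi m q ε = (1 - ε) * psi m j ε * tailRatioSum m j ε := by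
  have hε' : 1 - ε ≠ 0 := sub_ne_zero.mpr hε.symm
  have hC : (m.choose j : ℝ) ≠ 0 := Nat.cast_ne_zero.mpr (Nat.choose_pos hj).ne'
  rw [← Ico_add_one_right_eq_Icc, sum_Ico_eq_sum_range, tailRatioSum, mul_sum,
    Nat.sub_add_comm hj]
  refine sum_congr rfl fun i hi => ?_
  obtain ⟨d, hd⟩ : ∃ d, m - j = i + d := ⟨m - j - i, by rw [mem_range] at hi; omega⟩
  rw [psi, psi, hd, show m - (j + i) = d by omega, pow_add, pow_add]
  field_simp
  ring

theorem Delta1_eq_inv_tailRatioSum (n k : ℕ) {ε : ℝ} (hε : ε ∈ Set.Ioo 0 1) :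
    Delta1 n k ε = (tailRatioSum (n - 1) (n - k - 1) ε)⁻¹ := by
  have h1ε : 0 < 1 - ε := sub_pos.mpr hε.2
  have hψ : 0 < psi (n - 1) (n - k - 1) ε := by
    have := hε.1
    have : 0 < (n - 1).choose (n - k - 1) := Nat.choose_pos (by omega)
    unfold psi
    positivity
  rw [Delta1, sum_psi_Icc_eq_mul_tailRatioSum (by omega) hε.2.ne,
    div_mul_cancel_left₀ (mul_pos h1ε hψ).ne']

theorem tailRatioSum_monotoneOn (m j : ℕ) : MonotoneOn (tailRatioSum m j) (Set.Ico 0 1) := by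
  intro a ha a' ha' haa'
  refine sum_le_sum fun i _ => mul_le_mul_of_nonneg_left ?_ (by positivity)
  have ha'0 : 0 ≤ a' := ha.1.trans haa'
  have h1a' : 0 < 1 - a' := sub_pos.mpr ha'.2
  exact div_le_div₀ (by positivity) (pow_le_pow_left₀ ha.1 haa' i) (by positivity)
    (pow_le_pow_left₀ h1a'.le (by linarith) _)

theorem tailRatioSum_pos {m j : ℕ} (hj : j ≤ m) {ε : ℝ} (hε : ε ∈ Set.Ioo 0 1) :
    0 < tailRatioSum m j ε := by
  have := hε.1
  have : 0 < 1 - ε := sub_pos.mpr hε.2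
  refine sum_pos (fun i hi => ?_) nonempty_range_add_one
  have : (0 : ℝ) < m.choose j := Nat.cast_pos.mpr (Nat.choose_pos hj)
  have : (0 : ℝ) < m.choose (j + i) :=
    Nat.cast_pos.mpr (Nat.choose_pos (by rw [mem_range] at hi; omega))
  positivity

theorem tailRatioSum_succ_lt {m j : ℕ} (hj : j + 1 ≤ m) {ε : ℝ} (hε : ε ∈ Set.Ioo 0 1) :
    tailRatioSum m (j + 1) ε < tailRatioSum m j ε := by
  obtain ⟨hε0, hε1⟩ := hε
  have h1ε : 0 < 1 - ε := sub_pos.mpr hε1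
  have hC : ∀ q ≤ m, (0 : ℝ) < m.choose q := fun q hq => Nat.cast_pos.mpr (Nat.choose_pos hq)
  rw [tailRatioSum, tailRatioSum, show m - (j + 1) + 1 = m - j by omega,
    sum_range_succ _ (m - j)]
  refine lt_add_of_le_of_pos (sum_le_sum fun i _ => ?_) ?_
  · gcongr ?_ * _
    rw [div_le_div_iff₀ (hC _ hj) (hC _ (by omega)), add_right_comm, mul_comm,
      mul_comm (m.choose (j + i) : ℝ)]
    exact_mod_cast Nat.choose_mul_choose_succ_le (m := m) (Nat.le_add_right j i)
  · have := hC (j + (m - j)) (by omega)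
    have := hC j (by omega)
    positivity

theorem Delta1_antitoneOn (n k : ℕ) : AntitoneOn (Delta1 n k) (Set.Ioo 0 1) := by
  intro a ha a' ha' haa'
  rw [Delta1_eq_inv_tailRatioSum n k ha, Delta1_eq_inv_tailRatioSum n k ha']
  exact inv_anti₀ (tailRatioSum_pos (by omega) ha)
    (tailRatioSum_monotoneOn _ _ (Set.Ioo_subset_Ico_self ha) (Set.Ioo_subset_Ico_self ha') haa')

theorem Delta1_succ_lt {n k : ℕ} (hk : k + 2 ≤ n) {ε : ℝ} (hε : ε ∈ Set.Ioo 0 1) :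
    Delta1 n (k + 1) ε < Delta1 n k ε := by
  rw [Delta1_eq_inv_tailRatioSum _ _ hε, Delta1_eq_inv_tailRatioSum _ _ hε,
    show n - k - 1 = n - (k + 1) - 1 + 1 by omega]
  exact inv_strictAnti₀ (tailRatioSum_pos (by omega) hε) (tailRatioSum_succ_lt (by omega) hε)

theorem one_sub_div_mem_Ioo {n b c : ℝ} (hn : 1 < n) (hb : 0 < b) (hbc : b < n * c)
    (hcb : c < b) :
    0 < 1 - n * (b - c) / ((n - 1) * b) ∧ 1 - n * (b - c) / ((n - 1) * b) < 1 := by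
  have hden : 0 < (n - 1) * b := mul_pos (sub_pos.mpr hn) hb
  constructor
  · rw [sub_pos, div_lt_one hden]
    linarith
  · exact sub_lt_self _ (div_pos (mul_pos (by linarith) (sub_pos.mpr hcb)) hden)

/-- Let `t = 1 − n(b−c)/((n−1)b)`, which lies in `(0,1)`, and for each
`k ∈ {1,…,n−1}` let `ε_k ∈ (0,1)` be the unique solution of `Δ₁(ε_k;k) = t`.
Then `ε_{k+1} < ε_k` for every `k ∈ {1,…,n−2}`: the supremum of mistake rates
supporting the evolutionary stability of `T_k` strictly increases as its
tolerance increases (as `k` decreases). -/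
theorem critical_error_rates_ordered (n : ℕ) (hn : 3 ≤ n) (b c : ℝ)
    (hb0 : 0 < b / n) (hbc : b / n < c) (hcb : c < b)
    (εc : ℕ → ℝ)
    (hεc : ∀ k : ℕ, 1 ≤ k → k ≤ n - 1 →
      εc k ∈ Set.Ioo (0 : ℝ) 1 ∧
        Delta1 n k (εc k) = 1 - n * (b - c) / (((n : ℝ) - 1) * b)) :
    (0 < 1 - n * (b - c) / (((n : ℝ) - 1) * b) ∧
      1 - n * (b - c) / (((n : ℝ) - 1) * b) < 1) ∧
    ∀ k : ℕ, 1 ≤ k → k ≤ n - 2 → εc (k + 1) < εc k := by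
  have hn0 : (0 : ℝ) < n := by positivity
  refine ⟨one_sub_div_mem_Ioo (by norm_cast; omega) ((div_pos_iff_of_pos_right hn0).mp hb0)
    ((div_lt_iff₀' hn0).mp hbc) hcb, fun k hk1 hk2 => ?_⟩
  obtain ⟨hεk, hΔk⟩ := hεc k hk1 (by omega)
  obtain ⟨hεk1, hΔk1⟩ := hεc (k + 1) (by omega) (by omega)
  by_contra! hle
  have hlt : Delta1 n (k + 1) (εc (k + 1)) < Delta1 n k (εc k) :=
    calc Delta1 n (k + 1) (εc (k + 1))
      _ < Delta1 n k (εc (k + 1)) := Delta1_succ_lt (by omega) hεk1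
      _ ≤ Delta1 n k (εc k) := Delta1_antitoneOn n k hεk hεk1 hle
  exact hlt.ne (hΔk1.trans hΔk.symm)
end

section
/- For every k ∈ {1,…,n−1} and every δ ∈ (0,1), the function ε ↦ D1(ε;k) + D2(ε;k) is strictly convex on the interval (0,1). -/
/-!
`D1` and every summand of `D2` are nonnegative multiples of `x ↦ x ^ a * (1 - x) ^ b` with
`a, b ∈ ℤ`, `b < 0`, and the coefficient `(1 - δ) / C(n-1, n-k-1)` of `D1` is positive. Such a
function is strictly convex on `(0, 1)`: its second derivative is
`x ^ (a-2) * (1-x) ^ (b-2) * (a(a-1)(1-x)² - 2abx(1-x) + b(b-1)x²)`, and the quadratic factor is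
positive because `a(a-1) ≥ 0` for an integer `a`.
-/

open Finset

/-- `D1(ε;k) = ((1−δ)/C(n−1,n−k−1))·ε^{−(n−k−1)}·(1−ε)^{−(k+1)}`. -/
noncomputable def D1 (n k : ℕ) (δ ε : ℝ) : ℝ :=
  ((1 - δ) / ((n - 1).choose (n - k - 1) : ℝ)) * (ε ^ (n - k - 1))⁻¹ *
    ((1 - ε) ^ (k + 1))⁻¹

/-- `D2(ε;k) = δ·Σ_{q=0}^{k} (C(n−1,n−k−1+q)/C(n−1,n−k−1))·ε^q·(1−ε)^{−(q+1)}`. -/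
noncomputable def D2 (n k : ℕ) (δ ε : ℝ) : ℝ :=
  δ * ∑ q ∈ range (k + 1),
    (((n - 1).choose (n - k - 1 + q) : ℝ) / ((n - 1).choose (n - k - 1) : ℝ)) *
      ε ^ q * ((1 - ε) ^ (q + 1))⁻¹

open Set

theorem StrictConvexOn.const_mul {E : Type*} [AddCommMonoid E] [Module ℝ E] {s : Set E}
    {f : E → ℝ} {c : ℝ} (hc : 0 < c) (hf : StrictConvexOn ℝ s f) :
    StrictConvexOn ℝ s fun x => c * f x :=
  ⟨hf.1, fun x hx y hy hxy a b ha hb hab => by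
    have := mul_lt_mul_of_pos_left (hf.2 hx hy hxy ha hb hab) hc
    simp only [smul_eq_mul] at this ⊢
    linarith⟩

theorem strictConvexOn_of_hasDerivAt2_pos {D : Set ℝ} (hD : Convex ℝ D) (hDo : IsOpen D)
    {f f' f'' : ℝ → ℝ} (hf : ∀ x ∈ D, HasDerivAt f (f' x) x)
    (hf' : ∀ x ∈ D, HasDerivAt f' (f'' x) x) (hf''₀ : ∀ x ∈ D, 0 < f'' x) :
    StrictConvexOn ℝ D f := by
  have hmono : StrictMonoOn f' D :=
    strictMonoOn_of_hasDerivWithinAt_pos hD (fun x hx => (hf' x hx).continuousAt.continuousWithinAt)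
      (fun x hx => (hf' x (interior_subset hx)).hasDerivWithinAt)
      (fun x hx => hf''₀ x (interior_subset hx))
  refine StrictMonoOn.strictConvexOn_of_deriv hD
    (fun x hx => (hf x hx).continuousAt.continuousWithinAt) ?_
  rw [hDo.interior_eq]
  exact hmono.congr fun x hx => ((hf x hx).deriv).symm

theorem hasDerivAt_zpow_mul_one_sub_zpow (a b : ℤ) {x : ℝ} (hx : x ≠ 0) (hx' : 1 - x ≠ 0) :
    HasDerivAt (fun y : ℝ => y ^ a * (1 - y) ^ b)
      (a * x ^ (a - 1) * (1 - x) ^ b - b * x ^ a * (1 - x) ^ (b - 1)) x := by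
  have h := (hasDerivAt_zpow a x (.inl hx)).mul
    ((hasDerivAt_zpow b (1 - x) (.inl hx')).comp x ((hasDerivAt_id x).const_sub 1))
  exact h.congr_deriv (by simp only [Function.comp_apply, mul_neg, mul_one]; ring)

theorem zpow_mul_one_sub_zpow_deriv2_factor_pos {a b x : ℝ} (ha : a ≤ 0 ∨ 1 ≤ a) (hb : b < 0)
    (hx₀ : 0 < x) (hx₁ : x < 1) :
    0 < a * (a - 1) * (1 - x) ^ 2 - 2 * a * b * x * (1 - x) + b * (b - 1) * x ^ 2 := by
  have hbx : 0 < -b * x ^ 2 := by have := neg_pos.2 hb; positivity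
  rcases ha with ha | ha
  · have key : a * (a - 1) * (1 - x) ^ 2 - 2 * a * b * x * (1 - x) + b * (b - 1) * x ^ 2 =
        (a * (1 - x) - b * x) ^ 2 + -a * (1 - x) ^ 2 + -b * x ^ 2 := by ring
    rw [key]
    linarith [sq_nonneg (a * (1 - x) - b * x), mul_nonneg (neg_nonneg.2 ha) (sq_nonneg (1 - x))]
  · have hx : 0 ≤ x * (1 - x) := mul_nonneg hx₀.le (by linarith)
    nlinarith [mul_nonneg (mul_nonneg (by linarith : 0 ≤ a) (sub_nonneg.2 ha)) (sq_nonneg (1 - x)),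
      mul_nonneg (mul_nonneg (by linarith : 0 ≤ a) (neg_nonneg.2 hb.le)) hx]

theorem strictConvexOn_zpow_mul_one_sub_zpow (a : ℤ) {b : ℤ} (hb : b < 0) :
    StrictConvexOn ℝ (Ioo 0 1) fun x : ℝ => x ^ a * (1 - x) ^ b := by
  refine strictConvexOn_of_hasDerivAt2_pos (convex_Ioo 0 1) isOpen_Ioo
    (fun x hx => hasDerivAt_zpow_mul_one_sub_zpow a b hx.1.ne' (sub_ne_zero.2 hx.2.ne'))
    (f'' := fun x => x ^ a * (1 - x) ^ b / (x ^ 2 * (1 - x) ^ 2) *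
      (a * (a - 1) * (1 - x) ^ 2 - 2 * a * b * x * (1 - x) + b * (b - 1) * x ^ 2)) ?_ ?_
  · rintro x ⟨hx₀, hx₁⟩
    have hx : x ≠ 0 := hx₀.ne'
    have hx' : 1 - x ≠ 0 := sub_ne_zero.2 hx₁.ne'
    have h := ((hasDerivAt_zpow_mul_one_sub_zpow (a - 1) b hx hx').const_mul (a : ℝ)).sub
      ((hasDerivAt_zpow_mul_one_sub_zpow a (b - 1) hx hx').const_mul (b : ℝ))
    refine (h.congr_deriv ?_).congr_of_eventuallyEq
      (.of_forall fun y => by simp only [Pi.sub_apply]; ring)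
    simp only [zpow_sub_one₀ hx, zpow_sub_one₀ hx']
    field_simp
    push_cast
    ring
  · rintro x ⟨hx₀, hx₁⟩
    have ha : (a : ℝ) ≤ 0 ∨ 1 ≤ (a : ℝ) := by
      rcases le_or_gt a 0 with h | h
      · exact .inl (by exact_mod_cast h)
      · exact .inr (by exact_mod_cast h)
    have := zpow_mul_one_sub_zpow_deriv2_factor_pos ha (by exact_mod_cast hb : (b : ℝ) < 0) hx₀ hx₁
    have : 0 < 1 - x := by linarith
    positivity

theorem strictConvexOn_D1 (n k : ℕ) {δ : ℝ} (hδ : δ < 1) :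
    StrictConvexOn ℝ (Ioo 0 1) (D1 n k δ) := by
  have hC : 0 < ((n - 1).choose (n - k - 1) : ℝ) := by
    exact_mod_cast Nat.choose_pos (by omega)
  refine ((strictConvexOn_zpow_mul_one_sub_zpow (-(n - k - 1 : ℕ)) (b := -(k + 1 : ℕ))
    (by omega)).const_mul (div_pos (sub_pos.2 hδ) hC)).congr fun ε _ => ?_
  simp only [D1, zpow_neg, zpow_natCast]
  ring

theorem convexOn_D2 (n k : ℕ) {δ : ℝ} (hδ : 0 ≤ δ) : ConvexOn ℝ (Ioo 0 1) (D2 n k δ) := by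
  have hterm : ∀ q ∈ range (k + 1), ConvexOn ℝ (Ioo 0 1) fun ε : ℝ =>
      (δ * ((n - 1).choose (n - k - 1 + q) / (n - 1).choose (n - k - 1) : ℝ)) •
        (ε ^ (q : ℤ) * (1 - ε) ^ (-(q + 1 : ℕ) : ℤ)) := fun q _ =>
    (strictConvexOn_zpow_mul_one_sub_zpow q (by omega)).convexOn.smul (by positivity)
  refine (Finset.sum_induction _ (ConvexOn ℝ (Ioo 0 1)) (fun _ _ => ConvexOn.add)
    (convexOn_const 0 (convex_Ioo 0 1)) hterm).congr fun ε _ => ?_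
  simp only [D2, Finset.mul_sum, Finset.sum_apply, smul_eq_mul, zpow_neg, zpow_natCast]
  refine Finset.sum_congr rfl fun q _ => ?_
  ring

theorem D1_add_D2_strictConvexOn_general (n : ℕ)
    (k : ℕ)
    (δ : ℝ) (hδ0 : 0 < δ) (hδ1 : δ < 1) :
    StrictConvexOn ℝ (Set.Ioo (0 : ℝ) 1) (fun ε => D1 n k δ ε + D2 n k δ ε) :=
  (strictConvexOn_D1 n k hδ1).add_convexOn (convexOn_D2 n k hδ0.le)

/-- For every `k ∈ {1,…,n−1}` and every `δ ∈ (0,1)`, the function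
`ε ↦ D1(ε;k) + D2(ε;k)` is strictly convex on `(0,1)`. -/
theorem D1_add_D2_strictConvexOn (n : ℕ) (hn : 2 ≤ n)
    (k : ℕ) (hk1 : 1 ≤ k) (hk2 : k ≤ n - 1)
    (δ : ℝ) (hδ0 : 0 < δ) (hδ1 : δ < 1) :
    StrictConvexOn ℝ (Set.Ioo (0 : ℝ) 1) (fun ε => D1 n k δ ε + D2 n k δ ε) :=
  D1_add_D2_strictConvexOn_general n k δ hδ0 hδ1
end

section
/- For every δ ∈ (0,1): (i) for each k ∈ {1,…,n−2} there exists ε* ∈ (0,1) at which the derivative of ε ↦ D1(ε;k) + D2(ε;k) vanishes; (ii) for k = n−1 the derivative of ε ↦ D1(ε;n−1) + D2(ε;n−1) is strictly positive everywhere on (0,1), so no such interior critical point exists. -/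
open Finset

lemma exists_deriv_zero_of_blowup (f : ℝ → ℝ) (C : ℝ) (hC : 0 < C)
    (hlb : ∀ x ∈ Set.Ioo (0:ℝ) 1, C / x ≤ f x ∧ C / (1 - x) ≤ f x)
    (hcont : ContinuousOn f (Set.Ioo (0:ℝ) 1)) :
    ∃ c ∈ Set.Ioo (0:ℝ) 1, deriv f c = 0 := by
  set M := f (1/2) with hM
  have hhalf : (1/2 : ℝ) ∈ Set.Ioo (0:ℝ) 1 := by norm_num
  have hM0 : 0 < M := lt_of_lt_of_le (by positivity : (0:ℝ) < C / (1/2)) (hlb _ hhalf).1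
  set x0 : ℝ := min (1/4) (C / (2*M)) with hx0
  have hx0pos : 0 < x0 := lt_min (by norm_num) (by positivity)
  have hx0le : x0 ≤ 1/4 := min_le_left _ _
  have hx0C : x0 ≤ C / (2*M) := min_le_right _ _
  have h1 : x0 * (2*M) ≤ C := (le_div_iff₀ (by positivity)).1 hx0C
  have key : 2*M ≤ C / x0 := (le_div_iff₀ hx0pos).2 (by nlinarith)
  have hx0mem : x0 ∈ Set.Ioo (0:ℝ) 1 := ⟨hx0pos, by linarith⟩
  have hx1mem : (1 - x0) ∈ Set.Ioo (0:ℝ) 1 := ⟨by linarith, by linarith⟩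
  have hfx0 : M < f x0 := by
    have := (hlb x0 hx0mem).1
    linarith
  have hfx1 : M < f (1 - x0) := by
    have := (hlb (1-x0) hx1mem).2
    have h2 : (1:ℝ) - (1 - x0) = x0 := by ring
    rw [h2] at this
    linarith
  have hsub : Set.Icc x0 (1-x0) ⊆ Set.Ioo (0:ℝ) 1 := by
    intro x hx
    exact ⟨by linarith [hx.1], by linarith [hx.2]⟩
  obtain ⟨c, hcK, hmin⟩ := isCompact_Icc.exists_isMinOn
    (Set.nonempty_Icc.2 (by linarith)) (hcont.mono hsub)
  have h12 : (1/2:ℝ) ∈ Set.Icc x0 (1-x0) := ⟨by linarith, by linarith⟩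
  have hfc : f c ≤ M := hmin h12
  have hne0 : c ≠ x0 := by intro h; rw [h] at hfc; linarith
  have hne1 : c ≠ 1 - x0 := by intro h; rw [h] at hfc; linarith
  have hc0 : x0 < c := lt_of_le_of_ne hcK.1 (Ne.symm hne0)
  have hc1 : c < 1 - x0 := lt_of_le_of_ne hcK.2 hne1
  have hloc : IsLocalMin f c := hmin.isLocalMin (Icc_mem_nhds hc0 hc1)
  exact ⟨c, ⟨by linarith, by linarith⟩, hloc.deriv_eq_zero⟩

/-- For every `δ ∈ (0,1)`: (i) for each `k ∈ {1,…,n−2}` there exists an interior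
critical point `ε* ∈ (0,1)` of `ε ↦ D1(ε;k) + D2(ε;k)`; (ii) for `k = n−1` the
derivative is strictly positive on `(0,1)`, so no interior critical point exists. -/
theorem D1_add_D2_critical_points (n : ℕ) (hn : 3 ≤ n)
    (δ : ℝ) (hδ0 : 0 < δ) (hδ1 : δ < 1) :
    (∀ k : ℕ, 1 ≤ k → k ≤ n - 2 →
      ∃ εstar : ℝ, εstar ∈ Set.Ioo (0 : ℝ) 1 ∧
        deriv (fun ε => D1 n k δ ε + D2 n k δ ε) εstar = 0) ∧
    (∀ ε : ℝ, ε ∈ Set.Ioo (0 : ℝ) 1 →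
      0 < deriv (fun ε' => D1 n (n - 1) δ ε' + D2 n (n - 1) δ ε') ε) := by
  constructor
  · intro k hk1 hk2
    have hA : 1 ≤ n - k - 1 := by omega
    have hchoose : 0 < ((n-1).choose (n-k-1) : ℝ) :=
      Nat.cast_pos.2 (Nat.choose_pos (by omega))
    set C : ℝ := (1 - δ) / ((n-1).choose (n-k-1) : ℝ) with hCdef
    have hC : 0 < C := div_pos (by linarith) hchoose
    have hlb : ∀ x ∈ Set.Ioo (0:ℝ) 1,
        C / x ≤ D1 n k δ x + D2 n k δ x ∧ C / (1-x) ≤ D1 n k δ x + D2 n k δ x := by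
      intro x hx
      have hx0 := hx.1
      have hx1 : (0:ℝ) < 1 - x := by linarith [hx.2]
      have hD2 : 0 ≤ D2 n k δ x := by
        apply mul_nonneg hδ0.le
        apply Finset.sum_nonneg
        intro q hq
        apply mul_nonneg (mul_nonneg (div_nonneg (Nat.cast_nonneg _) (Nat.cast_nonneg _))
          (pow_nonneg hx0.le q))
        exact inv_nonneg.2 (pow_nonneg hx1.le _)
      have hinv1 : x⁻¹ ≤ (x ^ (n-k-1))⁻¹ := by
        apply inv_anti₀ (pow_pos hx0 _)
        calc x ^ (n-k-1) ≤ x ^ 1 := pow_le_pow_of_le_one hx0.le hx.2.le hA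
          _ = x := pow_one x
      have hinv1' : 1 ≤ (x ^ (n-k-1))⁻¹ := by
        rw [le_inv_comm₀ one_pos (pow_pos hx0 _)]
        simpa using pow_le_one₀ hx0.le hx.2.le
      have hinv2 : (1-x)⁻¹ ≤ ((1-x) ^ (k+1))⁻¹ := by
        apply inv_anti₀ (pow_pos hx1 _)
        calc (1-x) ^ (k+1) ≤ (1-x) ^ 1 := pow_le_pow_of_le_one hx1.le (by linarith) (by omega)
          _ = 1 - x := pow_one _
      have hinv2' : 1 ≤ ((1-x) ^ (k+1))⁻¹ := by
        rw [le_inv_comm₀ one_pos (pow_pos hx1 _)]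
        simpa using pow_le_one₀ hx1.le (by linarith : 1 - x ≤ 1)
      have hD1a : C / x ≤ D1 n k δ x := by
        unfold D1
        rw [← hCdef]
        calc C / x = C * x⁻¹ * 1 := by rw [div_eq_mul_inv, mul_one]
          _ ≤ C * (x ^ (n-k-1))⁻¹ * ((1-x) ^ (k+1))⁻¹ := by
              apply mul_le_mul _ hinv2' one_pos.le
              · positivity
              · exact mul_le_mul_of_nonneg_left hinv1 hC.le
      have hD1b : C / (1-x) ≤ D1 n k δ x := by
        unfold D1
        rw [← hCdef]
        calc C / (1-x) = C * 1 * (1-x)⁻¹ := by rw [div_eq_mul_inv, mul_one]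
          _ ≤ C * (x ^ (n-k-1))⁻¹ * ((1-x) ^ (k+1))⁻¹ := by
              apply mul_le_mul _ hinv2 (inv_nonneg.2 hx1.le)
              · positivity
              · exact mul_le_mul_of_nonneg_left hinv1' hC.le
      exact ⟨by linarith, by linarith⟩
    have hcont : ContinuousOn (fun ε => D1 n k δ ε + D2 n k δ ε) (Set.Ioo (0:ℝ) 1) := by
      apply ContinuousOn.add
      · unfold D1
        apply ContinuousOn.mul
        · apply ContinuousOn.mul continuousOn_const
          exact (continuous_pow _).continuousOn.inv₀
            fun x hx => pow_ne_zero _ (ne_of_gt hx.1)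
        · exact ((continuous_const.sub continuous_id).pow _).continuousOn.inv₀
            fun x hx => pow_ne_zero _ (by simp; linarith [hx.2] : (1:ℝ) - x ≠ 0)
      · unfold D2
        apply ContinuousOn.mul continuousOn_const
        apply continuousOn_finset_sum
        intro q hq
        apply ContinuousOn.mul
        · exact continuousOn_const.mul (continuous_pow _).continuousOn
        · exact ((continuous_const.sub continuous_id).pow _).continuousOn.inv₀
            fun x hx => pow_ne_zero _ (by simp; linarith [hx.2] : (1:ℝ) - x ≠ 0)
    obtain ⟨c, hc, hd⟩ := exists_deriv_zero_of_blowup _ C hC hlb hcont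
    exact ⟨c, hc, hd⟩
  · intro ε hε
    have e0 : n - (n-1) - 1 = 0 := by omega
    have e1 : (n-1) + 1 = n := by omega
    have hfg : ∀ x : ℝ, x < 1 →
        D1 n (n-1) δ x + D2 n (n-1) δ x = ((1-x)^n)⁻¹ := by
      intro x hx
      have hx1 : (1:ℝ) - x ≠ 0 := ne_of_gt (by linarith)
      unfold D1 D2
      rw [e0, e1]
      simp only [Nat.choose_zero_right, Nat.cast_one, div_one, pow_zero, inv_one,
        mul_one, Nat.zero_add, zero_add]
      have hsum : ∑ q ∈ range n, ((n-1).choose q : ℝ) * x^q * ((1-x)^(q+1))⁻¹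
          = ((1-x)^n)⁻¹ := by
        have key : ∀ q ∈ range n, ((n-1).choose q : ℝ) * x^q * ((1-x)^(q+1))⁻¹
            = (x^q * (1-x)^(n-1-q) * ((n-1).choose q : ℝ)) * ((1-x)^n)⁻¹ := by
          intro q hq
          have hq' : q < n := mem_range.1 hq
          have hp : (1-x)^n = (1-x)^(n-1-q) * (1-x)^(q+1) := by
            rw [← pow_add]; congr 1; omega
          field_simp
          rw [hp]; ring
        rw [Finset.sum_congr rfl key, ← Finset.sum_mul]
        have hb : ∑ q ∈ range n, x^q * (1-x)^(n-1-q) * ((n-1).choose q : ℝ) = 1 := by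
          have hbin := add_pow x (1-x) (n-1)
          rw [e1] at hbin
          simp only [add_sub_cancel, one_pow] at hbin
          exact hbin.symm
        rw [hb, one_mul]
      rw [hsum]; ring
    have heq : (fun ε' => D1 n (n-1) δ ε' + D2 n (n-1) δ ε')
        =ᶠ[nhds ε] fun x => ((1-x)^n)⁻¹ := by
      filter_upwards [Iio_mem_nhds hε.2] with x hx using hfg x hx
    rw [heq.deriv_eq]
    have h1x : (0:ℝ) < 1 - ε := by linarith [hε.2]
    have h0 : HasDerivAt (fun x : ℝ => 1 - x) (-1) ε := by
      simpa using (hasDerivAt_id ε).const_sub 1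
    have hd : HasDerivAt (fun x : ℝ => ((1-x)^n)⁻¹)
        (-((n:ℝ) * (1-ε)^(n-1) * (-1)) / ((1-ε)^n)^2) ε :=
      (h0.pow n).inv (pow_ne_zero _ (ne_of_gt h1x))
    rw [hd.deriv]
    have hn0 : (0:ℝ) < (n:ℝ) := by exact_mod_cast (by omega : 0 < n)
    have hrw : -((n:ℝ) * (1-ε)^(n-1) * (-1)) = (n:ℝ) * (1-ε)^(n-1) := by ring
    rw [hrw]
    exact div_pos (mul_pos hn0 (pow_pos h1x _)) (pow_pos (pow_pos h1x _) _)
end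

section
/- For every δ ∈ (0,1) and every k ∈ {1,…,n−2}: if ε* ∈ (0,1) satisfies (d/dε)[D1(ε;k) + D2(ε;k)] = 0 at ε = ε*, then D1(ε*;k+1) + D2(ε*;k+1) = D1(ε*;k) + D2(ε*;k). That is, the curve for tolerance level k+1 passes exactly through the critical point of the curve for tolerance level k. -/
/-! At level `k` write `D1 + D2 = N / B` with `N = 1 - δ + δ · P(Bin(n - 1, ε) ≥ n - k - 1)` and
`B = (1 - ε) · b_{n-1, n-k-1}(ε)`, `b` a Bernstein polynomial. Since the binomial tail
differentiates to a single Bernstein polynomial, passing from level `k` to `k + 1` replaces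
`N, B` by `N + c N', B + c B'` with the same `c = (1 - ε) / (k + 1)`; at a critical point
`N' / B' = N / B`, so the quotient does not change. -/

open Finset

open Polynomial Filter Topology

namespace bernsteinPolynomial

variable {R : Type*} [CommRing R]

theorem derivative_sum_tail (a k : ℕ) :
    derivative (∑ q ∈ range (k + 1), bernsteinPolynomial R (a + 1 + k) (a + 1 + q)) =
      ((a + k : ℕ) + 1 : R[X]) * bernsteinPolynomial R (a + k) a := by
  have hterm : ∀ q, derivative (bernsteinPolynomial R (a + 1 + k) (a + 1 + q)) =
      ((a + k : ℕ) + 1 : R[X]) *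
        (bernsteinPolynomial R (a + k) (a + q) - bernsteinPolynomial R (a + k) (a + (q + 1))) := by
    intro q
    rw [show a + 1 + k = a + k + 1 by omega, show a + 1 + q = a + q + 1 by omega]
    exact derivative_succ_aux R (a + k) (a + q)
  rw [derivative_sum, Finset.sum_congr rfl fun q _ => hterm q, ← Finset.mul_sum,
    Finset.sum_range_sub' (fun q => bernsteinPolynomial R (a + k) (a + q)),
    eq_zero_of_lt R (by omega : a + k < a + (k + 1)), add_zero, sub_zero]

theorem natCast_sub_mul_succ (m ν : ℕ) :
    ((m + 1 - ν : ℕ) : R[X]) * bernsteinPolynomial R (m + 1) ν =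
      ((m + 1 : ℕ) : R[X]) * (1 - X) * bernsteinPolynomial R m ν := by
  rcases le_or_gt ν m with h | h
  · obtain ⟨j, rfl⟩ := Nat.exists_eq_add_of_le h
    have hchoose := congrArg (Nat.cast (R := R[X])) (Nat.choose_mul_succ_eq (ν + j) ν)
    rw [show ν + j + 1 - ν = j + 1 by omega] at hchoose ⊢
    rw [bernsteinPolynomial, bernsteinPolynomial, show ν + j + 1 - ν = j + 1 by omega,
      Nat.add_sub_cancel_left, pow_succ]
    push_cast at hchoose ⊢
    linear_combination (X ^ ν * (1 - X) ^ j * (1 - X)) * hchoose.symm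
  · rw [Nat.sub_eq_zero_of_le h, eq_zero_of_lt R h]
    simp

end bernsteinPolynomial

theorem mul_eq_mul_of_deriv_eq_zero_of_eventuallyEq_div {𝕜 : Type*} [NontriviallyNormedField 𝕜]
    {f N B : 𝕜 → 𝕜} {x N' B' : 𝕜} (hf : f =ᶠ[𝓝 x] fun y => N y / B y)
    (hN : HasDerivAt N N' x) (hB : HasDerivAt B B' x) (hBx : B x ≠ 0) (hcrit : deriv f x = 0) :
    N' * B x = N x * B' := by
  have h := ((hN.div hB hBx).congr_of_eventuallyEq hf).deriv
  rw [hcrit, eq_comm, div_eq_zero_iff, sub_eq_zero] at h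
  exact h.resolve_right (pow_ne_zero 2 hBx)

theorem div_eq_div_of_mul_eq_add_mul {K : Type*} [Field K] {N B N' B' N₁ B₁ s t : K}
    (hcrit : N' * B = N * B') (hN : s * N₁ = s * N + t * N') (hB : s * B₁ = s * B + t * B')
    (hs : s ≠ 0) (hB₀ : B ≠ 0) (hB₁ : B₁ ≠ 0) : N₁ / B₁ = N / B := by
  rw [div_eq_div_iff hB₁ hB₀]
  apply mul_left_cancel₀ hs
  linear_combination B * hN - N * hB + t * hcrit

/-- With `n = M + k + 1`, the sum is the binomial tail `P(Bin(n - 1, ε) ≥ M)`. -/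
noncomputable def curveNumerator (δ : ℝ) (M k : ℕ) : ℝ[X] :=
  C (1 - δ) + C δ * ∑ q ∈ range (k + 1), bernsteinPolynomial ℝ (M + k) (M + q)

noncomputable def curveDenominator (M k : ℕ) : ℝ[X] :=
  (1 - X) * bernsteinPolynomial ℝ (M + k) M

theorem D1_add_D2_eq_eval_div {n M k : ℕ} (hn : M + k + 1 = n) (δ : ℝ) {x : ℝ} (hx₀ : x ≠ 0)
    (hx₁ : x ≠ 1) :
    D1 n k δ x + D2 n k δ x = (curveNumerator δ M k).eval x / (curveDenominator M k).eval x := by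
  subst hn
  have h1x : 1 - x ≠ 0 := sub_ne_zero.mpr hx₁.symm
  have hC : ((M + k).choose M : ℝ) ≠ 0 := by
    exact_mod_cast (Nat.choose_pos (Nat.le_add_right M k)).ne'
  rw [D1, D2, show M + k + 1 - k - 1 = M by omega, Nat.add_sub_cancel]
  simp only [curveNumerator, curveDenominator, bernsteinPolynomial, eval_add, eval_mul, eval_C,
    eval_finsetSum, eval_pow, eval_sub, eval_one, eval_X, eval_natCast, add_div, mul_div_assoc,
    Finset.sum_div, Finset.mul_sum, Nat.add_sub_cancel_left]
  congr 1
  · field_simp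
    ring
  · refine Finset.sum_congr rfl fun q hq => ?_
    have hqk : q ≤ k := Nat.lt_succ_iff.mp (Finset.mem_range.mp hq)
    rw [Nat.add_sub_add_left, ← pow_sub_mul_pow (1 - x) hqk]
    field_simp
    ring

theorem curveDenominator_eval_pos (M k : ℕ) {x : ℝ} (hx : x ∈ Set.Ioo 0 1) :
    0 < (curveDenominator M k).eval x := by
  obtain ⟨hx₀, hx₁⟩ := hx
  have hC : (0 : ℝ) < (M + k).choose M := by exact_mod_cast Nat.choose_pos (Nat.le_add_right M k)
  simp only [curveDenominator, bernsteinPolynomial, eval_mul, eval_sub, eval_one, eval_X,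
    eval_pow, eval_natCast]
  have : 0 < 1 - x := sub_pos.mpr hx₁
  positivity

theorem curveNumerator_succ_eq_add_derivative (δ : ℝ) (a k : ℕ) :
    ((k + 1 : ℕ) : ℝ[X]) * curveNumerator δ a (k + 1) =
      ((k + 1 : ℕ) : ℝ[X]) * curveNumerator δ (a + 1) k +
        (1 - X) * derivative (curveNumerator δ (a + 1) k) := by
  have hsucc : curveNumerator δ a (k + 1) =
      curveNumerator δ (a + 1) k + C δ * bernsteinPolynomial ℝ (a + k + 1) a := by
    rw [curveNumerator, curveNumerator, Finset.sum_range_succ', add_zero,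
      show a + (k + 1) = a + 1 + k by omega,
      Finset.sum_congr rfl fun q _ => congrArg _ (show a + (q + 1) = a + 1 + q by omega),
      show a + 1 + k = a + k + 1 by omega]
    ring
  have hderiv : derivative (curveNumerator δ (a + 1) k) =
      C δ * (((a + k : ℕ) + 1 : ℝ[X]) * bernsteinPolynomial ℝ (a + k) a) := by
    rw [curveNumerator, derivative_add, derivative_C, zero_add, derivative_C_mul,
      bernsteinPolynomial.derivative_sum_tail]
  have hdeg := bernsteinPolynomial.natCast_sub_mul_succ (R := ℝ) (a + k) a
  rw [show a + k + 1 - a = k + 1 by omega] at hdeg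
  rw [hsucc, hderiv]
  push_cast at hdeg ⊢
  linear_combination C δ * hdeg

theorem curveDenominator_succ_eq_add_derivative (a k : ℕ) :
    ((k + 1 : ℕ) : ℝ[X]) * curveDenominator a (k + 1) =
      ((k + 1 : ℕ) : ℝ[X]) * curveDenominator (a + 1) k +
        (1 - X) * derivative (curveDenominator (a + 1) k) := by
  have hdeg₀ := bernsteinPolynomial.natCast_sub_mul_succ (R := ℝ) (a + k) a
  have hdeg₁ := bernsteinPolynomial.natCast_sub_mul_succ (R := ℝ) (a + k) (a + 1)
  rw [show a + k + 1 - a = k + 1 by omega] at hdeg₀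
  rw [show a + k + 1 - (a + 1) = k by omega] at hdeg₁
  rw [curveDenominator, curveDenominator, show a + (k + 1) = a + k + 1 by omega,
    show a + 1 + k = a + k + 1 by omega, derivative_mul, derivative_sub, derivative_one,
    derivative_X, bernsteinPolynomial.derivative_succ_aux]
  push_cast at hdeg₀ hdeg₁ ⊢
  linear_combination (1 - X) * hdeg₀ - (1 - X) * hdeg₁

theorem curves_meet_at_critical_point_general (n : ℕ) (hn : 3 ≤ n)
    (δ : ℝ)
    (k : ℕ) (hk2 : k ≤ n - 2)
    (εstar : ℝ) (hε : εstar ∈ Set.Ioo (0 : ℝ) 1)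
    (hcrit : deriv (fun ε => D1 n k δ ε + D2 n k δ ε) εstar = 0) :
    D1 n (k + 1) δ εstar + D2 n (k + 1) δ εstar =
      D1 n k δ εstar + D2 n k δ εstar := by
  obtain ⟨a, ha⟩ : ∃ a, a + 1 + k + 1 = n := ⟨n - k - 2, by omega⟩
  have hrep : ∀ M j, M + j + 1 = n → ∀ x ∈ Set.Ioo (0 : ℝ) 1, D1 n j δ x + D2 n j δ x =
      (curveNumerator δ M j).eval x / (curveDenominator M j).eval x :=
    fun M j h x hx => D1_add_D2_eq_eval_div h δ hx.1.ne' hx.2.ne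
  have hB : ∀ M j, (curveDenominator M j).eval εstar ≠ 0 :=
    fun M j => (curveDenominator_eval_pos M j hε).ne'
  have hcrit' : (derivative (curveNumerator δ (a + 1) k)).eval εstar *
      (curveDenominator (a + 1) k).eval εstar =
      (curveNumerator δ (a + 1) k).eval εstar *
        (derivative (curveDenominator (a + 1) k)).eval εstar :=
    mul_eq_mul_of_deriv_eq_zero_of_eventuallyEq_div
      (eventually_of_mem (isOpen_Ioo.mem_nhds hε) (hrep (a + 1) k ha)) (Polynomial.hasDerivAt _ _)
      (Polynomial.hasDerivAt _ _) (hB _ _) hcrit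
  rw [hrep a (k + 1) (by omega) _ hε, hrep (a + 1) k ha _ hε]
  refine div_eq_div_of_mul_eq_add_mul (s := (k : ℝ) + 1) (t := 1 - εstar) hcrit' ?_ ?_
    (by positivity) (hB _ _) (hB _ _)
  · simpa using congrArg (eval εstar) (curveNumerator_succ_eq_add_derivative δ a k)
  · simpa using congrArg (eval εstar) (curveDenominator_succ_eq_add_derivative a k)

/-- For every `δ ∈ (0,1)` and `k ∈ {1,…,n−2}`: if `ε* ∈ (0,1)` is a critical
point of `ε ↦ D1(ε;k) + D2(ε;k)`, then the curve for tolerance level `k+1`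
passes exactly through that point:
`D1(ε*;k+1) + D2(ε*;k+1) = D1(ε*;k) + D2(ε*;k)`. -/
theorem curves_meet_at_critical_point (n : ℕ) (hn : 3 ≤ n)
    (δ : ℝ) (hδ0 : 0 < δ) (hδ1 : δ < 1)
    (k : ℕ) (hk1 : 1 ≤ k) (hk2 : k ≤ n - 2)
    (εstar : ℝ) (hε : εstar ∈ Set.Ioo (0 : ℝ) 1)
    (hcrit : deriv (fun ε => D1 n k δ ε + D2 n k δ ε) εstar = 0) :
    D1 n (k + 1) δ εstar + D2 n (k + 1) δ εstar =
      D1 n k δ εstar + D2 n k δ εstar :=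
  curves_meet_at_critical_point_general n hn δ k hk2 εstar hε hcrit
end
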